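/- Let (t_k) be a sequence of positive reals with t_k → 0, for each k let (x^k,y^k) be a Karush–Kuhn–Tucker point of the Scholtes-type regularization S(t_k), and suppose (x^k,y^k) → (x̄,ȳ) where (x̄,ȳ) is a nondegenerate T-stationary point of the regularized continuous reformulation R. Then for all sufficiently large k the upper-bound active index sets coincide: E(ȳ) = E(y^k). -/

import Mathlib

/-!
Normalise the KKT multipliers of `S(t_k)` by `1 + ‖·‖` and pass to a limit along an ultrafilter:
this gives `ρ` and `ā` with `ρ • (∇f(x̄), c) = Φ(ā)` and `ρ + ‖ā‖ = 1`, where `Φ` is the linear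
combination of constraint gradients. The multiplier `η` of `-t ≤ xᵢ yᵢ ≤ t` contributes
`η • (yᵢ eᵢ, xᵢ eᵢ)`, so off `E(yᵏ)` the `(eᵢ, 0)`- and `(0, eᵢ)`-coefficients satisfy
`w₁ xᵢ = w₂ yᵢ`; in the limit this kills exactly the coefficients that MPOC-LICQ at `(x̄, ȳ)` does
not control, and MPOC-LICQ gives `ā = ρ • (T-multipliers)`. If `i₀ ∈ E(ȳ)` but `i₀ ∉ E(yᵏ)` along
the ultrafilter, the `(0, e_{i₀})`-coefficient of `ā` vanishes while that of the T-multipliers is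
`-μ̄_{2,i₀} < 0` (NDT2); hence `ρ = 0` and `ā = 0`, contradicting `ρ + ‖ā‖ = 1`. The inclusion
`E(yᵏ) ⊆ E(ȳ)` is continuity.
-/

open scoped Classical
open Finset Filter Topology

noncomputable section
namespace Scholtes

/-- Vectors in ℝⁿ. -/
abbrev Vec (n : ℕ) := Fin n → ℝ

variable {n : ℕ} {P Q : Type*} [Fintype P] [Fintype Q]

/-- Euclidean dot product. -/
def dot (u v : Vec n) : ℝ := ∑ i, u i * v i

/-- Gradient: vector of partial derivatives. -/
def grad (f : Vec n → ℝ) (x : Vec n) : Vec n := fun i => fderiv ℝ f x (Pi.single i 1)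

/-- Hessian bilinear form of `L` at `z`, evaluated at directions `ξ`, `ζ`. -/
def hess (L : Vec n × Vec n → ℝ) (z ξ ζ : Vec n × Vec n) : ℝ :=
  fderiv ℝ (fun w => fderiv ℝ L w ξ) z ζ

/-- The pair vector (e_i, 0) ∈ ℝ²ⁿ. -/
def ex (i : Fin n) : Vec n × Vec n := (Pi.single i 1, 0)

/-- The pair vector (0, e_i) ∈ ℝ²ⁿ. -/
def ey (i : Fin n) : Vec n × Vec n := (0, Pi.single i 1)

/-- The pair vector (0, e) ∈ ℝ²ⁿ, where e is the all-ones vector. -/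
def eAll : Vec n × Vec n := (0, fun _ => 1)

/-- The pair vector (y_i e_i, x_i e_i) ∈ ℝ²ⁿ. -/
def hvec (x y : Vec n) (i : Fin n) : Vec n × Vec n := (Pi.single i (y i), Pi.single i (x i))

/-- The number of negative eigenvalues of the bilinear form `B` restricted to the
(sub)space `T`, expressed as the maximal dimension of a linear subspace of `T` on
which the associated quadratic form is negative definite. -/
def negIndex (B : (Vec n × Vec n) → (Vec n × Vec n) → ℝ) (T : (Vec n × Vec n) → Prop) : ℕ :=
  sSup {d : ℕ | ∃ W : Submodule ℝ (Vec n × Vec n),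
    (∀ ξ ∈ W, T ξ) ∧ Module.finrank ℝ W = d ∧ ∀ ξ ∈ W, ξ ≠ 0 → B ξ ξ < 0}

/-- The data and standing assumptions of the paper: objective `f`, equality
constraints `h`, inequality constraints `g`, positive pairwise different linear
coefficients `c`, cardinality bound `s` and regularization parameter `ε`. -/
structure Setting (n : ℕ) (P Q : Type*) [Fintype P] [Fintype Q] where
  f : Vec n → ℝ
  h : P → Vec n → ℝ
  g : Q → Vec n → ℝ
  c : Vec n
  s : ℕ
  ε : ℝ
  hn : 1 ≤ n
  hf : ContDiff ℝ 2 f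
  hh : ∀ p, ContDiff ℝ 2 (h p)
  hg : ∀ q, ContDiff ℝ 2 (g q)
  hcpos : ∀ i, 0 < c i
  hcinj : Function.Injective c
  hs : s < n
  hεpos : 0 < ε
  hεle : ε ≤ 1 / ((n : ℝ) - s)

/-- Index set a01: x̄_i = 0, ȳ_i > 0. -/
def a01 (x y : Vec n) : Finset (Fin n) := univ.filter fun i => x i = 0 ∧ 0 < y i

/-- Index set a10: x̄_i ≠ 0, ȳ_i = 0. -/
def a10 (x y : Vec n) : Finset (Fin n) := univ.filter fun i => x i ≠ 0 ∧ y i = 0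

/-- Index set a00: x̄_i = 0, ȳ_i = 0. -/
def a00 (x y : Vec n) : Finset (Fin n) := univ.filter fun i => x i = 0 ∧ y i = 0

/-- Index set N(y): y_i = 0. -/
def Nact (y : Vec n) : Finset (Fin n) := univ.filter fun i => y i = 0

/-- Index set H≥(x,y): x_i y_i = −t. -/
def Hge (t : ℝ) (x y : Vec n) : Finset (Fin n) := univ.filter fun i => x i * y i = -t

/-- Index set H≤(x,y): x_i y_i = t. -/
def Hle (t : ℝ) (x y : Vec n) : Finset (Fin n) := univ.filter fun i => x i * y i = t

/-- Index set H(x,y) = H≥ ∪ H≤. -/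
def Hact (t : ℝ) (x y : Vec n) : Finset (Fin n) := Hge t x y ∪ Hle t x y

/-- Active inequality constraints Q0(x). -/
def Q0 (D : Setting n P Q) (x : Vec n) : Finset Q := univ.filter fun q => D.g q x = 0

/-- Active upper bounds E(y): y_i = 1 + ε. -/
def Eact (D : Setting n P Q) (y : Vec n) : Finset (Fin n) := univ.filter fun i => y i = 1 + D.ε

/-- Index set O(x,y) = complement of E(y) ∪ N(y) ∪ H(x,y). -/
def Oact (D : Setting n P Q) (t : ℝ) (x y : Vec n) : Finset (Fin n) :=
  (Eact D y ∪ Nact y ∪ Hact t x y)ᶜ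

/-- Feasibility for the regularized continuous reformulation R. -/
def feasR (D : Setting n P Q) (x y : Vec n) : Prop :=
  (∀ p, D.h p x = 0) ∧ (∀ q, 0 ≤ D.g q x) ∧ ((n : ℝ) - D.s ≤ ∑ i, y i) ∧
  (∀ i, x i * y i = 0) ∧ (∀ i, 0 ≤ y i ∧ y i ≤ 1 + D.ε)

/-- Feasibility for the Scholtes-type regularization S(t). -/
def feasS (D : Setting n P Q) (t : ℝ) (x y : Vec n) : Prop :=
  (∀ p, D.h p x = 0) ∧ (∀ q, 0 ≤ D.g q x) ∧ ((n : ℝ) - D.s ≤ ∑ i, y i) ∧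
  (∀ i, -t ≤ x i * y i ∧ x i * y i ≤ t) ∧ (∀ i, 0 ≤ y i ∧ y i ≤ 1 + D.ε)

/-- Multipliers for T-stationarity (defined on the whole index ranges). -/
structure TMult (n : ℕ) (P Q : Type*) where
  lam : P → ℝ
  mu1 : Q → ℝ
  mu2 : Fin n → ℝ
  mu3 : ℝ
  sig1 : Fin n → ℝ
  sig2 : Fin n → ℝ
  rho1 : Fin n → ℝ
  rho2 : Fin n → ℝ

/-- The T-stationarity equation (1) of Definition 2. -/
def TStatEq (D : Setting n P Q) (x y : Vec n) (M : TMult n P Q) : Prop :=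
  ((grad D.f x, D.c) : Vec n × Vec n) =
    (∑ p, M.lam p • ((grad (D.h p) x, (0 : Vec n)) : Vec n × Vec n))
    + (∑ q ∈ Q0 D x, M.mu1 q • ((grad (D.g q) x, (0 : Vec n)) : Vec n × Vec n))
    - (∑ i ∈ Eact D y, M.mu2 i • ey i)
    + M.mu3 • eAll
    + (∑ i ∈ a01 x y, M.sig1 i • ex i)
    + (∑ i ∈ a10 x y, M.sig2 i • ey i)
    + (∑ i ∈ a00 x y, (M.rho1 i • ex i + M.rho2 i • ey i))

/-- (x,y) is a T-stationary point of R with multipliers M. -/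
def TStatAt (D : Setting n P Q) (x y : Vec n) (M : TMult n P Q) : Prop :=
  feasR D x y ∧
  (∀ q ∈ Q0 D x, 0 ≤ M.mu1 q) ∧
  (∀ i ∈ Eact D y, 0 ≤ M.mu2 i) ∧
  0 ≤ M.mu3 ∧
  M.mu3 * ((∑ i, y i) - ((n : ℝ) - D.s)) = 0 ∧
  (∀ i ∈ a00 x y, M.rho1 i = 0 ∨ M.rho2 i ≤ 0) ∧
  TStatEq D x y M

/-- (x,y) is a T-stationary point of R. -/
def TStat (D : Setting n P Q) (x y : Vec n) : Prop := ∃ M, TStatAt D x y M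

/-- MPOC-tailored LICQ at a feasible point (x,y) of R: the indicated family of
vectors in ℝ²ⁿ is linearly independent. -/
def MPOC_LICQ (D : Setting n P Q) (x y : Vec n) : Prop :=
  ∀ (lam : P → ℝ) (mu1 : Q → ℝ) (mu2 : Fin n → ℝ) (mu3 : ℝ) (s1 s2 : Fin n → ℝ),
    ((∑ i, y i) ≠ (n : ℝ) - D.s → mu3 = 0) →
    (∑ p, lam p • ((grad (D.h p) x, (0 : Vec n)) : Vec n × Vec n))
    + (∑ q ∈ Q0 D x, mu1 q • ((grad (D.g q) x, (0 : Vec n)) : Vec n × Vec n))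
    + (∑ i ∈ Eact D y, mu2 i • ey i)
    + mu3 • eAll
    + (∑ i ∈ a01 x y ∪ a00 x y, s1 i • ex i)
    + (∑ i ∈ a10 x y ∪ a00 x y, s2 i • ey i) = 0 →
    (∀ p, lam p = 0) ∧ (∀ q ∈ Q0 D x, mu1 q = 0) ∧ (∀ i ∈ Eact D y, mu2 i = 0) ∧
    mu3 = 0 ∧ (∀ i ∈ a01 x y ∪ a00 x y, s1 i = 0) ∧ (∀ i ∈ a10 x y ∪ a00 x y, s2 i = 0)

/-- The Lagrange function L^R associated with the T-stationary point (x̄,ȳ)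
and multipliers M. -/
def LagR (D : Setting n P Q) (xb yb : Vec n) (M : TMult n P Q) (z : Vec n × Vec n) : ℝ :=
  D.f z.1 + dot D.c z.2
    - (∑ p, M.lam p * D.h p z.1)
    - (∑ q ∈ Q0 D xb, M.mu1 q * D.g q z.1)
    + (∑ i ∈ Eact D yb, M.mu2 i * (z.2 i - (1 + D.ε)))
    - M.mu3 * ((∑ i, z.2 i) - ((n : ℝ) - D.s))
    - (∑ i ∈ a01 xb yb, M.sig1 i * z.1 i)
    - (∑ i ∈ a10 xb yb, M.sig2 i * z.2 i)
    - (∑ i ∈ a00 xb yb, (M.rho1 i * z.1 i + M.rho2 i * z.2 i))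

/-- Membership in the tangent space T^R at (x̄,ȳ). -/
def inTR (D : Setting n P Q) (x y : Vec n) (ξ : Vec n × Vec n) : Prop :=
  (∀ p, dot (grad (D.h p) x) ξ.1 = 0) ∧
  (∀ q ∈ Q0 D x, dot (grad (D.g q) x) ξ.1 = 0) ∧
  (∀ i ∈ Eact D y, ξ.2 i = 0) ∧
  ((∑ i, y i) = (n : ℝ) - D.s → (∑ i, ξ.2 i) = 0) ∧
  (∀ i ∈ a00 x y ∪ a01 x y, ξ.1 i = 0) ∧
  (∀ i ∈ a00 x y ∪ a10 x y, ξ.2 i = 0)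

/-- Nondegenerate T-stationary point with multipliers M (NDT1–NDT4). -/
def NondegTStatAt (D : Setting n P Q) (x y : Vec n) (M : TMult n P Q) : Prop :=
  TStatAt D x y M ∧
  MPOC_LICQ D x y ∧
  (∀ q ∈ Q0 D x, 0 < M.mu1 q) ∧
  (∀ i ∈ Eact D y, 0 < M.mu2 i) ∧
  ((∑ i, y i) = (n : ℝ) - D.s → 0 < M.mu3) ∧
  (∀ i ∈ a00 x y, M.rho1 i ≠ 0 ∧ M.rho2 i < 0) ∧
  (∀ ξ, inTR D x y ξ → (∀ ζ, inTR D x y ζ → hess (LagR D x y M) (x, y) ξ ζ = 0) → ξ = 0)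

/-- T-index: quadratic index (number of negative eigenvalues of the restricted
Hessian of L^R) plus the biactive index |a00|. -/
def TIndex (D : Setting n P Q) (x y : Vec n) (M : TMult n P Q) : ℕ :=
  negIndex (hess (LagR D x y M) (x, y)) (inTR D x y) + (a00 x y).card

/-- Multipliers for KKT points of S(t) (defined on the whole index ranges). -/
structure SMult (n : ℕ) (P Q : Type*) where
  lam : P → ℝ
  mu1 : Q → ℝ
  mu2 : Fin n → ℝ
  mu3 : ℝ
  etaGe : Fin n → ℝ
  etaLe : Fin n → ℝ
  nu : Fin n → ℝ

/-- The KKT equation for S(t). -/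
def KKTEq (D : Setting n P Q) (t : ℝ) (x y : Vec n) (M : SMult n P Q) : Prop :=
  ((grad D.f x, D.c) : Vec n × Vec n) =
    (∑ p, M.lam p • ((grad (D.h p) x, (0 : Vec n)) : Vec n × Vec n))
    + (∑ q ∈ Q0 D x, M.mu1 q • ((grad (D.g q) x, (0 : Vec n)) : Vec n × Vec n))
    - (∑ i ∈ Eact D y, M.mu2 i • ey i)
    + M.mu3 • eAll
    + (∑ i ∈ Hge t x y, M.etaGe i • hvec x y i)
    - (∑ i ∈ Hle t x y, M.etaLe i • hvec x y i)
    + (∑ i ∈ Nact y, M.nu i • ey i)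

/-- (x,y) is a KKT point of S(t) with multipliers M. -/
def KKTAt (D : Setting n P Q) (t : ℝ) (x y : Vec n) (M : SMult n P Q) : Prop :=
  feasS D t x y ∧
  (∀ q ∈ Q0 D x, 0 ≤ M.mu1 q) ∧
  (∀ i ∈ Eact D y, 0 ≤ M.mu2 i) ∧
  0 ≤ M.mu3 ∧
  M.mu3 * ((∑ i, y i) - ((n : ℝ) - D.s)) = 0 ∧
  (∀ i ∈ Hge t x y, 0 ≤ M.etaGe i) ∧
  (∀ i ∈ Hle t x y, 0 ≤ M.etaLe i) ∧
  (∀ i ∈ Nact y, 0 ≤ M.nu i) ∧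
  KKTEq D t x y M

/-- (x,y) is a KKT point of S(t). -/
def KKT (D : Setting n P Q) (t : ℝ) (x y : Vec n) : Prop := ∃ M, KKTAt D t x y M

/-- LICQ at a feasible point (x,y) of S(t). -/
def LICQ (D : Setting n P Q) (t : ℝ) (x y : Vec n) : Prop :=
  ∀ (lam : P → ℝ) (mu1 : Q → ℝ) (mu2 : Fin n → ℝ) (mu3 : ℝ) (eta nu : Fin n → ℝ),
    ((∑ i, y i) ≠ (n : ℝ) - D.s → mu3 = 0) →
    (∑ p, lam p • ((grad (D.h p) x, (0 : Vec n)) : Vec n × Vec n))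
    + (∑ q ∈ Q0 D x, mu1 q • ((grad (D.g q) x, (0 : Vec n)) : Vec n × Vec n))
    + (∑ i ∈ Eact D y, mu2 i • ey i)
    + mu3 • eAll
    + (∑ i ∈ Hact t x y, eta i • hvec x y i)
    + (∑ i ∈ Nact y, nu i • ey i) = 0 →
    (∀ p, lam p = 0) ∧ (∀ q ∈ Q0 D x, mu1 q = 0) ∧ (∀ i ∈ Eact D y, mu2 i = 0) ∧
    mu3 = 0 ∧ (∀ i ∈ Hact t x y, eta i = 0) ∧ (∀ i ∈ Nact y, nu i = 0)

/-- The Lagrange function L^S associated with the KKT point (x̄,ȳ) of S(t)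
and multipliers M. -/
def LagS (D : Setting n P Q) (t : ℝ) (xb yb : Vec n) (M : SMult n P Q)
    (z : Vec n × Vec n) : ℝ :=
  D.f z.1 + dot D.c z.2
    - (∑ p, M.lam p * D.h p z.1)
    - (∑ q ∈ Q0 D xb, M.mu1 q * D.g q z.1)
    + (∑ i ∈ Eact D yb, M.mu2 i * (z.2 i - (1 + D.ε)))
    - M.mu3 * ((∑ i, z.2 i) - ((n : ℝ) - D.s))
    - (∑ i ∈ Hge t xb yb, M.etaGe i * (z.1 i * z.2 i + t))
    + (∑ i ∈ Hle t xb yb, M.etaLe i * (z.1 i * z.2 i - t))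
    - (∑ i ∈ Nact yb, M.nu i * z.2 i)

/-- Membership in the tangent space T^S at (x,y) for S(t). -/
def inTS (D : Setting n P Q) (t : ℝ) (x y : Vec n) (ξ : Vec n × Vec n) : Prop :=
  (∀ p, dot (grad (D.h p) x) ξ.1 = 0) ∧
  (∀ q ∈ Q0 D x, dot (grad (D.g q) x) ξ.1 = 0) ∧
  (∀ i ∈ Eact D y, ξ.2 i = 0) ∧
  ((∑ i, y i) = (n : ℝ) - D.s → (∑ i, ξ.2 i) = 0) ∧
  (∀ i ∈ Hact t x y, y i * ξ.1 i + x i * ξ.2 i = 0) ∧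
  (∀ i ∈ Nact y, ξ.2 i = 0)

/-- Nondegenerate KKT point of S(t) with multipliers M (ND1–ND3). -/
def NondegKKTAt (D : Setting n P Q) (t : ℝ) (x y : Vec n) (M : SMult n P Q) : Prop :=
  KKTAt D t x y M ∧
  LICQ D t x y ∧
  (∀ q ∈ Q0 D x, 0 < M.mu1 q) ∧
  (∀ i ∈ Eact D y, 0 < M.mu2 i) ∧
  (∀ i ∈ Hge t x y, 0 < M.etaGe i) ∧
  (∀ i ∈ Hle t x y, 0 < M.etaLe i) ∧
  (∀ i ∈ Nact y, 0 < M.nu i) ∧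
  ((∑ i, y i) = (n : ℝ) - D.s → 0 < M.mu3) ∧
  (∀ ξ, inTS D t x y ξ → (∀ ζ, inTS D t x y ζ → hess (LagS D t x y M) (x, y) ξ ζ = 0) → ξ = 0)

/-- Quadratic index of a KKT point of S(t): number of negative eigenvalues of
the restricted Hessian of L^S. -/
def QIdx (D : Setting n P Q) (t : ℝ) (x y : Vec n) (M : SMult n P Q) : ℕ :=
  negIndex (hess (LagS D t x y M) (x, y)) (inTS D t x y)

theorem sum_smul_eq_sum_ite {α M : Type*} [Fintype α] [DecidableEq α] [AddCommMonoid M]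
    [Module ℝ M] (S : Finset α) (c : α → ℝ) (v : α → M) :
    ∑ i ∈ S, c i • v i = ∑ i, (if i ∈ S then c i else 0) • v i := by
  simp [ite_smul, Finset.sum_ite_mem]

theorem sum_smul_eq_sum_of_forall_notMem {α M : Type*} [Fintype α] [AddCommMonoid M]
    [Module ℝ M] {S : Finset α} {c : α → ℝ} (v : α → M) (hc : ∀ i ∉ S, c i = 0) :
    ∑ i, c i • v i = ∑ i ∈ S, c i • v i :=
  (sum_subset (subset_univ S) fun i _ hi => by rw [hc i hi, zero_smul]).symm

theorem exists_tendsto_inv_one_add_norm_smul {ι E : Type*} [NormedAddCommGroup E]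
    [NormedSpace ℝ E] [ProperSpace E] (U : Ultrafilter ι) (a : ι → E) :
    ∃ ρ : ℝ, ∃ ā : E, Tendsto (fun k => (1 + ‖a k‖)⁻¹) U (𝓝 ρ) ∧
      Tendsto (fun k => (1 + ‖a k‖)⁻¹ • a k) U (𝓝 ā) ∧ ρ + ‖ā‖ = 1 := by
  set u : ι → ℝ × E := fun k => ((1 + ‖a k‖)⁻¹, (1 + ‖a k‖)⁻¹ • a k)
  have hu : ∀ k, (u k).1 + ‖(u k).2‖ = 1 := fun k => by
    have : 0 < 1 + ‖a k‖ := by positivity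
    simp only [u, norm_smul, norm_inv, Real.norm_of_nonneg this.le]
    field_simp
  have hball : ∀ k, u k ∈ Metric.closedBall (0 : ℝ × E) 1 := fun k => by
    have h1 := norm_nonneg (u k).2
    have h2 : 0 ≤ (u k).1 := by positivity
    rw [mem_closedBall_zero_iff, Prod.norm_def, Real.norm_of_nonneg h2]
    exact max_le (by linarith [hu k]) (by linarith [hu k])
  obtain ⟨z, -, hz⟩ := (isCompact_closedBall (0 : ℝ × E) 1).ultrafilter_le_nhds (U.map u)
    (le_principal_iff.2 (Ultrafilter.mem_map.2 (univ_mem' hball)))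
  have hz : Tendsto u U (𝓝 z) := by rwa [Ultrafilter.coe_map] at hz
  refine ⟨z.1, z.2, hz.fst_nhds, hz.snd_nhds, tendsto_nhds_unique_of_eventuallyEq
    (hz.fst_nhds.add hz.snd_nhds.norm) tendsto_const_nhds (Eventually.of_forall hu)⟩

theorem continuous_grad {f : Vec n → ℝ} {k : WithTop ℕ∞} (hf : ContDiff ℝ k f)
    (hk : k ≠ 0) : Continuous (grad f) :=
  continuous_pi fun _ => (hf.continuous_fderiv hk).clm_apply continuous_const

/-- Coefficients `(λ, μ₁, μ₃, w₁, w₂)` of `(∇hₚ, 0)`, `(∇g_q, 0)`, `(0, e)`, `(eᵢ, 0)` and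
`(0, eᵢ)`. -/
abbrev Coeff (n : ℕ) (P Q : Type*) := (P → ℝ) × (Q → ℝ) × ℝ × Vec n × Vec n

def multiplierMap (D : Setting n P Q) (x : Vec n) : Coeff n P Q →ₗ[ℝ] Vec n × Vec n where
  toFun a := (∑ p, a.1 p • ((grad (D.h p) x, 0) : Vec n × Vec n))
    + (∑ q, a.2.1 q • ((grad (D.g q) x, 0) : Vec n × Vec n))
    + a.2.2.1 • eAll + (∑ i, a.2.2.2.1 i • ex i) + ∑ i, a.2.2.2.2 i • ey i
  map_add' a b := by
    simp only [Prod.fst_add, Prod.snd_add, Pi.add_apply, add_smul, sum_add_distrib]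
    abel
  map_smul' c a := by
    simp only [Prod.smul_fst, Prod.smul_snd, Pi.smul_apply, smul_eq_mul, smul_add, smul_sum,
      mul_smul, RingHom.id_apply]

theorem continuous_multiplierMap (D : Setting n P Q) :
    Continuous fun z : Vec n × Coeff n P Q => multiplierMap D z.1 z.2 := by
  have hh := fun p => continuous_grad (D.hh p) (by norm_num)
  have hg := fun q => continuous_grad (D.hg q) (by norm_num)
  simp only [multiplierMap, LinearMap.coe_mk, AddHom.coe_mk]
  fun_prop

theorem hvec_eq (x y : Vec n) (i : Fin n) : hvec x y i = y i • ex i + x i • ey i := by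
  simp [hvec, ex, ey, ← Pi.single_smul]

def netEta (t : ℝ) (x y : Vec n) (M : SMult n P Q) (i : Fin n) : ℝ :=
  (if i ∈ Hge t x y then M.etaGe i else 0) - if i ∈ Hle t x y then M.etaLe i else 0

def kktCoeff (D : Setting n P Q) (t : ℝ) (x y : Vec n) (M : SMult n P Q) : Coeff n P Q :=
  (M.lam, fun q => if q ∈ Q0 D x then M.mu1 q else 0, M.mu3,
    fun i => netEta t x y M i * y i,
    fun i => (if i ∈ Nact y then M.nu i else 0) + netEta t x y M i * x i
      - if i ∈ Eact D y then M.mu2 i else 0)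

theorem KKTEq.eq_multiplierMap {D : Setting n P Q} {t : ℝ} {x y : Vec n} {M : SMult n P Q}
    (h : KKTEq D t x y M) :
    ((grad D.f x, D.c) : Vec n × Vec n) = multiplierMap D x (kktCoeff D t x y M) := by
  rw [h]
  simp only [multiplierMap, kktCoeff, netEta, LinearMap.coe_mk, AddHom.coe_mk, hvec_eq, smul_add,
    smul_smul, sum_add_distrib, sum_smul_eq_sum_ite (Q0 D x), sum_smul_eq_sum_ite (Eact D y),
    sum_smul_eq_sum_ite (Nact y), sum_smul_eq_sum_ite (Hge t x y),
    sum_smul_eq_sum_ite (Hle t x y), ite_mul, zero_mul, sub_mul, sub_smul, add_smul,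
    sum_sub_distrib]
  abel

theorem kktCoeff_mul_eq (D : Setting n P Q) (t : ℝ) (x y : Vec n) (M : SMult n P Q) {i : Fin n}
    (hi : i ∉ Eact D y) :
    (kktCoeff D t x y M).2.2.2.1 i * x i = (kktCoeff D t x y M).2.2.2.2 i * y i := by
  have hN : (if i ∈ Nact y then M.nu i else 0) * y i = 0 := by
    split_ifs with h
    · simp_all [Nact]
    · rw [zero_mul]
  simp only [kktCoeff, if_neg hi, sub_zero, add_mul, hN]
  ring

def tStatCoeff (D : Setting n P Q) (x y : Vec n) (M : TMult n P Q) : Coeff n P Q :=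
  (M.lam, fun q => if q ∈ Q0 D x then M.mu1 q else 0, M.mu3,
    fun i => (if i ∈ a01 x y then M.sig1 i else 0) + if i ∈ a00 x y then M.rho1 i else 0,
    fun i => (if i ∈ a10 x y then M.sig2 i else 0) + (if i ∈ a00 x y then M.rho2 i else 0)
      - if i ∈ Eact D y then M.mu2 i else 0)

theorem TStatEq.eq_multiplierMap {D : Setting n P Q} {x y : Vec n} {M : TMult n P Q}
    (h : TStatEq D x y M) :
    ((grad D.f x, D.c) : Vec n × Vec n) = multiplierMap D x (tStatCoeff D x y M) := by
  rw [h]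
  simp only [multiplierMap, tStatCoeff, LinearMap.coe_mk, AddHom.coe_mk, sum_add_distrib,
    sum_smul_eq_sum_ite (Q0 D x), sum_smul_eq_sum_ite (Eact D y), sum_smul_eq_sum_ite (a01 x y),
    sum_smul_eq_sum_ite (a10 x y), sum_smul_eq_sum_ite (a00 x y), sub_smul, add_smul,
    sum_sub_distrib]
  abel

def licqSupport (D : Setting n P Q) (x y : Vec n) : Submodule ℝ (Coeff n P Q) where
  carrier := {a | (∀ q ∉ Q0 D x, a.2.1 q = 0) ∧ ((∑ i, y i) ≠ n - D.s → a.2.2.1 = 0) ∧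
    (∀ i ∉ a01 x y ∪ a00 x y, a.2.2.2.1 i = 0) ∧
    (∀ i ∉ Eact D y ∪ (a10 x y ∪ a00 x y), a.2.2.2.2 i = 0)}
  add_mem' := by
    rintro a b ⟨ha₁, ha₂, ha₃, ha₄⟩ ⟨hb₁, hb₂, hb₃, hb₄⟩
    refine ⟨fun q hq => ?_, fun h => ?_, fun i hi => ?_, fun i hi => ?_⟩ <;>
      simp [*]
  zero_mem' := by simp
  smul_mem' := by
    rintro c a ⟨ha₁, ha₂, ha₃, ha₄⟩
    refine ⟨fun q hq => ?_, fun h => ?_, fun i hi => ?_, fun i hi => ?_⟩ <;>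
      simp [*]

theorem tStatCoeff_mem_licqSupport {D : Setting n P Q} {x y : Vec n} {M : TMult n P Q}
    (h : TStatAt D x y M) : tStatCoeff D x y M ∈ licqSupport D x y := by
  refine ⟨fun q hq => if_neg hq, fun hs => ?_, fun i hi => ?_, fun i hi => ?_⟩
  · exact (mul_eq_zero.1 h.2.2.2.2.1).resolve_right (sub_ne_zero.2 hs)
  · simp only [mem_union, not_or] at hi
    simp [tStatCoeff, hi.1, hi.2]
  · simp only [mem_union, not_or] at hi
    simp [tStatCoeff, hi.1, hi.2.1, hi.2.2]

theorem tStatCoeff_apply_of_mem_Eact (D : Setting n P Q) (x y : Vec n) (M : TMult n P Q) {i : Fin n}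
    (hi : i ∈ Eact D y) : (tStatCoeff D x y M).2.2.2.2 i = -M.mu2 i := by
  have hy : y i ≠ 0 := by
    simp only [Eact, mem_filter, mem_univ, true_and] at hi
    linarith [D.hεpos]
  simp [tStatCoeff, a10, a00, hy, hi]

theorem MPOC_LICQ.eq_zero {D : Setting n P Q} {x y : Vec n} (hL : MPOC_LICQ D x y)
    {a : Coeff n P Q} (ha : a ∈ licqSupport D x y) (h : multiplierMap D x a = 0) : a = 0 := by
  obtain ⟨lam, mu, m, w₁, w₂⟩ := a
  obtain ⟨hmu, hm, hw₁, hw₂⟩ := ha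
  have hdisj : Disjoint (Eact D y) (a10 x y ∪ a00 x y) := by
    simp only [disjoint_left, Eact, a10, a00, mem_union, mem_filter, mem_univ, true_and]
    rintro i hE (⟨-, h0⟩ | ⟨-, h0⟩) <;> linarith [D.hεpos]
  dsimp only at hmu hm hw₁ hw₂
  have hcomb := h
  simp only [multiplierMap, LinearMap.coe_mk, AddHom.coe_mk] at hcomb
  rw [sum_smul_eq_sum_of_forall_notMem _ hmu, sum_smul_eq_sum_of_forall_notMem _ hw₁,
    sum_smul_eq_sum_of_forall_notMem _ hw₂, sum_union hdisj] at hcomb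
  obtain ⟨hlam, hmu', hw₂E, hm', hw₁', hw₂'⟩ :=
    hL lam mu w₂ m w₁ w₂ hm (by rw [← hcomb]; abel)
  refine Prod.ext (funext hlam) (Prod.ext (funext fun q => ?_)
    (Prod.ext hm' (Prod.ext (funext fun i => ?_) (funext fun i => ?_))))
  · by_cases hq : q ∈ Q0 D x
    exacts [hmu' q hq, hmu q hq]
  · by_cases hi : i ∈ a01 x y ∪ a00 x y
    exacts [hw₁' i hi, hw₁ i hi]
  · by_cases hE : i ∈ Eact D y
    · exact hw₂E i hE
    by_cases hi : i ∈ a10 x y ∪ a00 x y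
    exacts [hw₂' i hi, hw₂ i (by simp only [mem_union] at hE hi ⊢; tauto)]

section Limits

variable {ι : Type*} {l : Filter ι} {D : Setting n P Q} {t : ι → ℝ} {X Y : ι → Vec n}
  {M : ι → SMult n P Q} {xb yb : Vec n}

theorem eventually_Eact_subset (D : Setting n P Q) (hY : Tendsto Y l (𝓝 yb)) :
    ∀ᶠ k in l, Eact D (Y k) ⊆ Eact D yb := by
  have h : ∀ i, ∀ᶠ k in l, Y k i = 1 + D.ε → yb i = 1 + D.ε := fun i => by
    by_cases hi : yb i = 1 + D.ε
    · exact Eventually.of_forall fun _ _ => hi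
    · exact ((tendsto_pi_nhds.1 hY i).eventually_ne hi).mono fun k hk h => absurd h hk
  filter_upwards [eventually_all.2 h] with k hk i
  simpa [Eact] using hk i

theorem eventually_notMem_Eact (hY : Tendsto Y l (𝓝 yb)) {i : Fin n} (hi : yb i ≠ 1 + D.ε) :
    ∀ᶠ k in l, i ∉ Eact D (Y k) := by
  filter_upwards [eventually_Eact_subset D hY] with k hk hiY
  exact hi (by simpa [Eact] using hk hiY)

theorem mul_eq_mul_of_tendsto_kktCoeff [l.NeBot] (hX : Tendsto X l (𝓝 xb))
    (hY : Tendsto Y l (𝓝 yb)) {r : ι → ℝ} {ā : Coeff n P Q}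
    (hā : Tendsto (fun k => r k • kktCoeff D (t k) (X k) (Y k) (M k)) l (𝓝 ā)) {i : Fin n}
    (hi : ∀ᶠ k in l, i ∉ Eact D (Y k)) : ā.2.2.2.1 i * xb i = ā.2.2.2.2 i * yb i := by
  refine tendsto_nhds_unique_of_eventuallyEq
    ((tendsto_pi_nhds.1 hā.snd_nhds.snd_nhds.snd_nhds.fst_nhds i).mul (tendsto_pi_nhds.1 hX i))
    ((tendsto_pi_nhds.1 hā.snd_nhds.snd_nhds.snd_nhds.snd_nhds i).mul (tendsto_pi_nhds.1 hY i))
    (hi.mono fun k hk => ?_)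
  simp only [Prod.smul_snd, Prod.smul_fst, Pi.smul_apply, smul_eq_mul, mul_assoc,
    kktCoeff_mul_eq D _ _ _ _ hk]

theorem mem_licqSupport_of_tendsto [l.NeBot] (hM : ∀ k, KKTAt D (t k) (X k) (Y k) (M k))
    (hfeas : feasR D xb yb) (hX : Tendsto X l (𝓝 xb)) (hY : Tendsto Y l (𝓝 yb))
    {r : ι → ℝ} {ā : Coeff n P Q}
    (hā : Tendsto (fun k => r k • kktCoeff D (t k) (X k) (Y k) (M k)) l (𝓝 ā)) :
    ā ∈ licqSupport D xb yb := by
  obtain ⟨-, -, hsum, hcompl, hy⟩ := hfeas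
  have hε := D.hεpos
  refine ⟨fun q hq => ?_, fun hs => ?_, fun i hi => ?_, fun i hi => ?_⟩
  · have hg : D.g q xb ≠ 0 := by simpa [Q0] using hq
    refine tendsto_nhds_unique_of_eventuallyEq (tendsto_pi_nhds.1 hā.snd_nhds.fst_nhds q)
      tendsto_const_nhds ?_
    filter_upwards [(((D.hg q).continuous.tendsto xb).comp hX).eventually_ne hg] with k hk
    simp [kktCoeff, Q0, show D.g q (X k) ≠ 0 from hk]
  · have hlt : (n : ℝ) - D.s < ∑ i, yb i := lt_of_le_of_ne hsum (Ne.symm hs)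
    refine tendsto_nhds_unique_of_eventuallyEq hā.snd_nhds.snd_nhds.fst_nhds
      tendsto_const_nhds ?_
    filter_upwards [(tendsto_finsetSum _ fun i _ => tendsto_pi_nhds.1 hY i).eventually
      (lt_mem_nhds hlt)] with k hk
    have hμ : (M k).mu3 = 0 :=
      (mul_eq_zero.1 (hM k).2.2.2.2.1).resolve_right (sub_ne_zero.2 hk.ne')
    simp [kktCoeff, hμ]
  · have hx : xb i ≠ 0 := fun hx => hi (by
      rcases (hy i).1.lt_or_eq with h | h <;> simp [a01, a00, hx, h])
    have hyi : yb i = 0 := (mul_eq_zero.1 (hcompl i)).resolve_left hx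
    have h := mul_eq_mul_of_tendsto_kktCoeff hX hY hā
      (eventually_notMem_Eact hY (by rw [hyi]; linarith))
    rw [hyi, mul_zero] at h
    exact (mul_eq_zero.1 h).resolve_right hx
  · simp only [mem_union, not_or] at hi
    have hE : yb i ≠ 1 + D.ε := by simpa [Eact] using hi.1
    have hyi : yb i ≠ 0 := fun h => by
      by_cases hx : xb i = 0
      · exact hi.2.2 (by simp [a00, hx, h])
      · exact hi.2.1 (by simp [a10, hx, h])
    have hx : xb i = 0 := (mul_eq_zero.1 (hcompl i)).resolve_right hyi
    have h := mul_eq_mul_of_tendsto_kktCoeff hX hY hā (eventually_notMem_Eact hY hE)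
    rw [hx, mul_zero] at h
    exact (mul_eq_zero.1 h.symm).resolve_right hyi

theorem eventually_mem_Eact_of_ultrafilter (U : Ultrafilter ι)
    (hM : ∀ k, KKTAt D (t k) (X k) (Y k) (M k)) (hX : Tendsto X U (𝓝 xb))
    (hY : Tendsto Y U (𝓝 yb)) {Mb : TMult n P Q} (hnd : NondegTStatAt D xb yb Mb) {i₀ : Fin n}
    (hi₀ : i₀ ∈ Eact D yb) : ∀ᶠ k in U, i₀ ∈ Eact D (Y k) := by
  obtain ⟨hT, hL, -, hμ₂, -⟩ := hnd
  by_contra hnot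
  obtain ⟨ρ, ā, hρ, hā, hnorm⟩ :=
    exists_tendsto_inv_one_add_norm_smul U fun k => kktCoeff D (t k) (X k) (Y k) (M k)
  have hlim : ρ • ((grad D.f xb, D.c) : Vec n × Vec n) = multiplierMap D xb ā := by
    refine tendsto_nhds_unique_of_eventuallyEq
      (hρ.smul ((((continuous_grad D.hf two_ne_zero).tendsto xb).comp hX).prodMk_nhds
        tendsto_const_nhds))
      (((continuous_multiplierMap D).tendsto (xb, ā)).comp (hX.prodMk_nhds hā))
      (Eventually.of_forall fun k => ?_)
    simp [(hM k).2.2.2.2.2.2.2.2.eq_multiplierMap]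
  have hā_eq : ā = ρ • tStatCoeff D xb yb Mb := by
    refine sub_eq_zero.1 (hL.eq_zero (sub_mem (mem_licqSupport_of_tendsto hM hT.1 hX hY hā)
      (Submodule.smul_mem _ ρ (tStatCoeff_mem_licqSupport hT))) ?_)
    rw [map_sub, map_smul, ← hT.2.2.2.2.2.2.eq_multiplierMap, hlim, sub_self]
  have hy : yb i₀ ≠ 0 := by
    have := D.hεpos
    simp only [Eact, mem_filter, mem_univ, true_and] at hi₀
    linarith
  have hx : xb i₀ = 0 := (mul_eq_zero.1 (hT.1.2.2.2.1 i₀)).resolve_right hy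
  have hw := mul_eq_mul_of_tendsto_kktCoeff hX hY hā (Ultrafilter.eventually_not.2 hnot)
  rw [hx, mul_zero, eq_comm, mul_eq_zero, or_iff_left hy, hā_eq] at hw
  have hρ0 : ρ = 0 := by
    simpa [tStatCoeff_apply_of_mem_Eact D xb yb Mb hi₀, (hμ₂ i₀ hi₀).ne'] using hw
  rw [hā_eq, hρ0, zero_smul, norm_zero, add_zero] at hnorm
  exact zero_ne_one hnorm

theorem eventually_Eact_eq (hM : ∀ k, KKTAt D (t k) (X k) (Y k) (M k))
    (hX : Tendsto X l (𝓝 xb)) (hY : Tendsto Y l (𝓝 yb)) {Mb : TMult n P Q}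
    (hnd : NondegTStatAt D xb yb Mb) : ∀ᶠ k in l, Eact D yb = Eact D (Y k) := by
  have hsup : ∀ᶠ k in l, Eact D yb ⊆ Eact D (Y k) :=
    (eventually_all_finset _).2 fun i hi => mem_iff_ultrafilter.2 fun U hU =>
      eventually_mem_Eact_of_ultrafilter U hM (hX.mono_left hU) (hY.mono_left hU) hnd hi
  filter_upwards [hsup, eventually_Eact_subset D hY] with k h₁ h₂ using h₁.antisymm h₂

end Limits

theorem statement11_general {n : ℕ} {P Q : Type*} [Fintype P] [Fintype Q]
    (D : Setting n P Q) (t : ℕ → ℝ)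
    (X Y : ℕ → Vec n) (hK : ∀ k, KKT D (t k) (X k) (Y k))
    (xb yb : Vec n)
    (hconv : Filter.Tendsto (fun k => ((X k, Y k) : Vec n × Vec n))
      Filter.atTop (nhds (xb, yb)))
    (Mb : TMult n P Q) (hnd : NondegTStatAt D xb yb Mb) :
    ∃ K : ℕ, ∀ k ≥ K, Eact D yb = Eact D (Y k) := by
  choose M hM using hK
  exact eventually_atTop.1 (eventually_Eact_eq hM hconv.fst_nhds hconv.snd_nhds hnd)

/-- Lemma 3b: if KKT points of S(t_k) converge to a
nondegenerate T-stationary point of R, then eventually E(ȳ) = E(y^k). -/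
theorem statement11 {n : ℕ} {P Q : Type*} [Fintype P] [Fintype Q]
    (D : Setting n P Q) (t : ℕ → ℝ) (htpos : ∀ k, 0 < t k)
    (ht0 : Filter.Tendsto t Filter.atTop (nhds 0))
    (X Y : ℕ → Vec n) (hK : ∀ k, KKT D (t k) (X k) (Y k))
    (xb yb : Vec n)
    (hconv : Filter.Tendsto (fun k => ((X k, Y k) : Vec n × Vec n))
      Filter.atTop (nhds (xb, yb)))
    (Mb : TMult n P Q) (hnd : NondegTStatAt D xb yb Mb) :
    ∃ K : ℕ, ∀ k ≥ K, Eact D yb = Eact D (Y k) :=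
  statement11_general D t X Y hK xb yb hconv Mb hnd

end Scholtes
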